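/- arXiv:2006.08325 — 3 statements merged into one kernel-verified Lean document; each statement's English description precedes it below -/
import Mathlib

section
/- Let (S,𝓐,μ) be a measure space and let 2 ≤ p < ∞. Then L^p(μ) is (2,√(p−1))-smooth; that is, for all f, g ∈ L^p(μ) one has ‖f+g‖_p² + ‖f−g‖_p² ≤ 2‖f‖_p² + 2(p−1)‖g‖_p². -/
/-!
The heart of the matter is the two-point inequality
`|a + b|^r + |a - b|^r ≤ 2 (a² + m b²)^(r/2)` for `m ≥ max 1 (r - 1)`. Scaling reduces it to
`(1 + t)^r + (1 - t)^r ≤ 2 (1 + m t²)^(r/2)` for `t ∈ [0, 1]`: for `r ≤ 2` this is concavity of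
`x ↦ x^(r/2)`, and the case `r - 2` gives the case `r` after integrating twice from `t = 0`.

For `f, g ∈ L^p`, integrating the two-point inequality with `m = p - 1` gives
`‖f + g‖_p^p + ‖f - g‖_p^p ≤ 2 ‖f² + (p - 1) g²‖_{p/2}^{p/2}`, Minkowski's inequality in `L^{p/2}`
bounds `‖f² + (p - 1) g²‖_{p/2}` by `‖f‖_p² + (p - 1) ‖g‖_p²`, and the power-mean inequality
`(u² + v²)^{p/2} ≤ 2^{p/2 - 1} (u^p + v^p)` passes from `p`-th powers of the norms to squares.
-/

open MeasureTheory Set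

lemma sq_rpow_div_two (x r : ℝ) : (x ^ 2) ^ (r / 2) = |x| ^ r := by
  rw [Real.rpow_div_two_eq_sqrt r (sq_nonneg x), Real.sqrt_sq_eq_abs]

lemma le_of_hasDerivAt_nonneg {f f' : ℝ → ℝ} {a b x : ℝ}
    (hf : ∀ y ∈ Icc a b, HasDerivAt f (f' y) y) (hf' : ∀ y ∈ Ioo a b, 0 ≤ f' y)
    (hx : x ∈ Icc a b) : f a ≤ f x :=
  monotoneOn_of_hasDerivWithinAt_nonneg (convex_Icc a b)
    (fun y hy ↦ (hf y hy).continuousAt.continuousWithinAt)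
    (fun y hy ↦ (hf y (interior_subset hy)).hasDerivWithinAt)
    (by rwa [interior_Icc]) (left_mem_Icc.2 (hx.1.trans hx.2)) hx hx.1

section TwoPoint

variable {r m t : ℝ}

lemma one_add_rpow_add_one_sub_rpow_le_of_le_two (hr₀ : 0 ≤ r) (hr₂ : r ≤ 2) (hm : 1 ≤ m)
    (ht : t ∈ Icc 0 1) : (1 + t) ^ r + (1 - t) ^ r ≤ 2 * (1 + m * t ^ 2) ^ (r / 2) := by
  have hconc := (Real.concaveOn_rpow (p := r / 2) (by linarith) (by linarith)).2
    (mem_Ici.2 (sq_nonneg (1 + t))) (mem_Ici.2 (sq_nonneg (1 - t)))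
    (by norm_num : (0 : ℝ) ≤ 1 / 2) (by norm_num : (0 : ℝ) ≤ 1 / 2) (by norm_num)
  simp only [smul_eq_mul, sq_rpow_div_two, abs_of_nonneg (by linarith [ht.1] : 0 ≤ 1 + t),
    abs_of_nonneg (by linarith [ht.2] : 0 ≤ 1 - t)] at hconc
  calc (1 + t) ^ r + (1 - t) ^ r
        ≤ 2 * (1 / 2 * (1 + t) ^ 2 + 1 / 2 * (1 - t) ^ 2) ^ (r / 2) := by linarith
    _ = 2 * (1 + t ^ 2) ^ (r / 2) := by ring_nf
    _ ≤ 2 * (1 + m * t ^ 2) ^ (r / 2) := by gcongr; nlinarith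

lemma one_add_rpow_sub_one_sub_rpow_le (hr : 2 ≤ r) (hm : 0 ≤ m)
    (ih : ∀ x ∈ Icc (0 : ℝ) 1,
      (1 + x) ^ (r - 2) + (1 - x) ^ (r - 2) ≤ 2 * (1 + m * x ^ 2) ^ ((r - 2) / 2))
    (ht : t ∈ Icc 0 1) :
    (1 + t) ^ (r - 1) - (1 - t) ^ (r - 1) ≤
      2 * (r - 1) * t * (1 + m * t ^ 2) ^ ((r - 2) / 2) := by
  set F := (1 + m * t ^ 2) ^ ((r - 2) / 2)
  set ψ : ℝ → ℝ := fun x ↦ 2 * (r - 1) * F * x - (1 + x) ^ (r - 1) + (1 - x) ^ (r - 1)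
  have hψ : ∀ x ∈ Icc 0 t,
      HasDerivAt ψ (2 * (r - 1) * F - (r - 1) * ((1 + x) ^ (r - 2) + (1 - x) ^ (r - 2))) x := by
    intro x _
    have h₁ := ((hasDerivAt_id' x).const_add 1).rpow_const (p := r - 1) (Or.inr (by linarith))
    have h₂ := ((hasDerivAt_id' x).const_sub 1).rpow_const (p := r - 1) (Or.inr (by linarith))
    refine ((((hasDerivAt_id' x).const_mul (2 * (r - 1) * F)).sub h₁).add h₂).congr_deriv ?_
    rw [show r - 1 - 1 = r - 2 by ring]
    ring
  have hψ' : ∀ x ∈ Ioo 0 t,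
      0 ≤ 2 * (r - 1) * F - (r - 1) * ((1 + x) ^ (r - 2) + (1 - x) ^ (r - 2)) := by
    intro x hx
    have hmono : (1 + m * x ^ 2) ^ ((r - 2) / 2) ≤ F :=
      Real.rpow_le_rpow (by positivity) (by gcongr; exacts [hx.1.le, hx.2.le]) (by linarith)
    have := ih x ⟨hx.1.le, hx.2.le.trans ht.2⟩
    nlinarith
  have := le_of_hasDerivAt_nonneg hψ hψ' ⟨ht.1, le_rfl⟩
  simp only [ψ, mul_zero, add_zero, sub_zero, Real.one_rpow] at this
  linarith

lemma one_add_rpow_add_one_sub_rpow_le_of_sub_two (hr : 2 ≤ r) (hrm : r - 1 ≤ m)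
    (ih : ∀ x ∈ Icc (0 : ℝ) 1,
      (1 + x) ^ (r - 2) + (1 - x) ^ (r - 2) ≤ 2 * (1 + m * x ^ 2) ^ ((r - 2) / 2))
    (ht : t ∈ Icc 0 1) : (1 + t) ^ r + (1 - t) ^ r ≤ 2 * (1 + m * t ^ 2) ^ (r / 2) := by
  have hm : 0 ≤ m := by linarith
  set φ : ℝ → ℝ := fun x ↦ 2 * (1 + m * x ^ 2) ^ (r / 2) - (1 + x) ^ r - (1 - x) ^ r
  set φ' : ℝ → ℝ := fun x ↦ 2 * r * m * x * (1 + m * x ^ 2) ^ ((r - 2) / 2)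
    - r * ((1 + x) ^ (r - 1) - (1 - x) ^ (r - 1))
  have hφ : ∀ x ∈ Icc 0 1, HasDerivAt φ (φ' x) x := by
    intro x _
    have h₀ := (((hasDerivAt_pow 2 x).const_mul m).const_add 1).rpow_const (p := r / 2)
      (Or.inl (by positivity))
    have h₁ := ((hasDerivAt_id' x).const_add 1).rpow_const (p := r) (Or.inr (by linarith))
    have h₂ := ((hasDerivAt_id' x).const_sub 1).rpow_const (p := r) (Or.inr (by linarith))
    refine (((h₀.const_mul 2).sub h₁).sub h₂).congr_deriv ?_
    rw [show r / 2 - 1 = (r - 2) / 2 by ring]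
    simp only [φ']
    ring
  have hφ' : ∀ x ∈ Ioo 0 1, 0 ≤ φ' x := by
    intro x hx
    have hF : 0 ≤ (1 + m * x ^ 2) ^ ((r - 2) / 2) := by positivity
    have := one_add_rpow_sub_one_sub_rpow_le hr hm ih (Ioo_subset_Icc_self hx)
    have hr0 : 0 ≤ r := by linarith
    simp only [φ']
    nlinarith [mul_le_mul_of_nonneg_left this hr0,
      mul_nonneg (mul_nonneg (mul_nonneg hr0 hx.1.le) hF) (sub_nonneg.2 hrm)]
  have := le_of_hasDerivAt_nonneg hφ hφ' ht
  simp only [φ, add_zero, sub_zero, Real.one_rpow, ne_eq, OfNat.ofNat_ne_zero,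
    not_false_eq_true, zero_pow, mul_zero] at this
  linarith

lemma one_add_rpow_add_one_sub_rpow_le (hr : 0 ≤ r) (hm : 1 ≤ m) (hrm : r - 1 ≤ m)
    (ht : t ∈ Icc 0 1) : (1 + t) ^ r + (1 - t) ^ r ≤ 2 * (1 + m * t ^ 2) ^ (r / 2) := by
  obtain ⟨n, hn⟩ : ∃ n : ℕ, r ≤ 2 * n := ⟨⌈r⌉₊, by linarith [Nat.le_ceil r]⟩
  induction n generalizing r t with
  | zero => exact one_add_rpow_add_one_sub_rpow_le_of_le_two hr (by simp at hn; linarith) hm ht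
  | succ n ih =>
    rcases le_or_gt r 2 with hr₂ | hr₂
    · exact one_add_rpow_add_one_sub_rpow_le_of_le_two hr hr₂ hm ht
    · exact one_add_rpow_add_one_sub_rpow_le_of_sub_two hr₂.le hrm
        (fun x hx ↦ ih (by linarith) (by linarith) hx (by push_cast at hn; linarith)) ht

lemma add_rpow_add_sub_rpow_le (hr : 0 ≤ r) (hm : 1 ≤ m) (hrm : r - 1 ≤ m) {x y : ℝ}
    (hy : 0 ≤ y) (hyx : y ≤ x) :
    (x + y) ^ r + (x - y) ^ r ≤ 2 * (x ^ 2 + m * y ^ 2) ^ (r / 2) := by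
  rcases (hy.trans hyx).eq_or_lt with rfl | hx
  · obtain rfl : y = 0 := le_antisymm hyx hy
    rcases hr.eq_or_lt with rfl | hr
    · norm_num
    · simp [Real.zero_rpow hr.ne', Real.zero_rpow (half_pos hr).ne']
  obtain ⟨t, ht, rfl⟩ : ∃ t ∈ Icc (0 : ℝ) 1, y = x * t :=
    ⟨y / x, ⟨div_nonneg hy hx.le, div_le_one_of_le₀ hyx hx.le⟩, by field_simp⟩
  calc (x + x * t) ^ r + (x - x * t) ^ r = x ^ r * ((1 + t) ^ r + (1 - t) ^ r) := by
        rw [mul_add, ← Real.mul_rpow hx.le (by linarith [ht.1]),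
          ← Real.mul_rpow hx.le (by linarith [ht.2])]
        ring_nf
    _ ≤ x ^ r * (2 * (1 + m * t ^ 2) ^ (r / 2)) := by
        gcongr
        exact one_add_rpow_add_one_sub_rpow_le hr hm hrm ht
    _ = 2 * (x ^ 2 + m * (x * t) ^ 2) ^ (r / 2) := by
        rw [show x ^ 2 + m * (x * t) ^ 2 = x ^ 2 * (1 + m * t ^ 2) by ring,
          Real.mul_rpow (sq_nonneg x) (by positivity), sq_rpow_div_two, abs_of_pos hx]
        ring

lemma abs_add_rpow_add_abs_sub_rpow_le (hr : 0 ≤ r) (hm : 1 ≤ m) (hrm : r - 1 ≤ m) (a b : ℝ) :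
    |a + b| ^ r + |a - b| ^ r ≤ 2 * (a ^ 2 + m * b ^ 2) ^ (r / 2) := by
  wlog hb : 0 ≤ b generalizing b
  · simpa [← sub_eq_add_neg, add_comm] using this (-b) (by linarith)
  wlog ha : 0 ≤ a generalizing a
  · simpa [← sub_eq_add_neg, add_comm, abs_sub_comm] using this (-a) (by linarith)
  rw [abs_of_nonneg (add_nonneg ha hb)]
  rcases le_total b a with hba | hab
  · rw [abs_of_nonneg (sub_nonneg.2 hba)]
    exact add_rpow_add_sub_rpow_le hr hm hrm hb hba
  · rw [abs_sub_comm, abs_of_nonneg (sub_nonneg.2 hab), add_comm a b]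
    calc (b + a) ^ r + (b - a) ^ r ≤ 2 * (b ^ 2 + m * a ^ 2) ^ (r / 2) :=
          add_rpow_add_sub_rpow_le hr hm hrm ha hab
      _ ≤ 2 * (a ^ 2 + m * b ^ 2) ^ (r / 2) := by
          have : b ^ 2 + m * a ^ 2 ≤ a ^ 2 + m * b ^ 2 := by
            nlinarith [mul_le_mul_of_nonneg_left (sq_le_sq' (by linarith) hab) (sub_nonneg.2 hm)]
          gcongr

end TwoPoint

lemma enorm_add_rpow_add_enorm_sub_rpow_le {r m : ℝ} (hr : 0 ≤ r) (hm : 1 ≤ m) (hrm : r - 1 ≤ m)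
    (a b : ℝ) : ‖a + b‖ₑ ^ r + ‖a - b‖ₑ ^ r ≤ 2 * ‖a ^ 2 + m * b ^ 2‖ₑ ^ (r / 2) := by
  have hH : 0 ≤ a ^ 2 + m * b ^ 2 := by nlinarith [sq_nonneg a, sq_nonneg b]
  simp only [Real.enorm_eq_ofReal_abs]
  rw [abs_of_nonneg hH, ENNReal.ofReal_rpow_of_nonneg (abs_nonneg _) hr,
    ENNReal.ofReal_rpow_of_nonneg (abs_nonneg _) hr,
    ENNReal.ofReal_rpow_of_nonneg hH (by positivity),
    ← ENNReal.ofReal_add (by positivity) (by positivity), ← ENNReal.ofReal_ofNat 2,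
    ← ENNReal.ofReal_mul zero_le_two]
  exact ENNReal.ofReal_le_ofReal (abs_add_rpow_add_abs_sub_rpow_le hr hm hrm a b)

section eLpNorm

variable {α : Type*} [MeasurableSpace α] {μ : Measure α}

lemma eLpNorm_ofReal_rpow_eq_lintegral {ε : Type*} [ENorm ε] {p : ℝ} (hp : 0 < p) (f : α → ε) :
    eLpNorm f (ENNReal.ofReal p) μ ^ p = ∫⁻ x, ‖f x‖ₑ ^ p ∂μ := by
  rw [eLpNorm_eq_lintegral_rpow_enorm_toReal (by simpa using hp) ENNReal.ofReal_ne_top,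
    ENNReal.toReal_ofReal hp.le, ← ENNReal.rpow_mul, one_div_mul_cancel hp.ne', ENNReal.rpow_one]

lemma eLpNorm_sq_ofReal_div_two {p : ℝ} (hp : 0 ≤ p) (f : α → ℝ) :
    eLpNorm (fun x ↦ f x ^ 2) (ENNReal.ofReal (p / 2)) μ = eLpNorm f (ENNReal.ofReal p) μ ^ 2 := by
  have := eLpNorm_norm_rpow f (p := ENNReal.ofReal (p / 2)) (μ := μ) two_pos
  simp only [Real.norm_eq_abs, Real.rpow_two, sq_abs, ENNReal.rpow_two] at this
  rwa [← ENNReal.ofReal_mul (by positivity), div_mul_cancel₀ _ two_ne_zero] at this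

theorem eLpNorm_add_sq_add_eLpNorm_sub_sq_le {p : ℝ} (hp : 2 ≤ p) {f g : α → ℝ}
    (hf : AEStronglyMeasurable f μ) (hg : AEStronglyMeasurable g μ) :
    eLpNorm (f + g) (.ofReal p) μ ^ 2 + eLpNorm (f - g) (.ofReal p) μ ^ 2 ≤
      2 * (eLpNorm f (.ofReal p) μ ^ 2 + .ofReal (p - 1) * eLpNorm g (.ofReal p) μ ^ 2) := by
  have hp₀ : 0 < p / 2 := by positivity
  set u := eLpNorm (f + g) (.ofReal p) μ
  set v := eLpNorm (f - g) (.ofReal p) μ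
  set H : α → ℝ := fun x ↦ f x ^ 2 + (p - 1) * g x ^ 2
  set W := eLpNorm H (.ofReal (p / 2)) μ
  have hpoint : u ^ p + v ^ p ≤ 2 * W ^ (p / 2) := by
    rw [eLpNorm_ofReal_rpow_eq_lintegral (by positivity),
      eLpNorm_ofReal_rpow_eq_lintegral (by positivity), eLpNorm_ofReal_rpow_eq_lintegral hp₀,
      ← lintegral_const_mul' _ _ ENNReal.ofNat_ne_top]
    refine (le_lintegral_add _ _).trans (lintegral_mono fun x ↦ ?_)
    exact enorm_add_rpow_add_enorm_sub_rpow_le (by positivity) (by linarith) le_rfl (f x) (g x)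
  have hMinkowski :
      W ≤ eLpNorm f (.ofReal p) μ ^ 2 + .ofReal (p - 1) * eLpNorm g (.ofReal p) μ ^ 2 := by
    calc W ≤ eLpNorm (fun x ↦ f x ^ 2) (.ofReal (p / 2)) μ
          + eLpNorm ((p - 1) • fun x ↦ g x ^ 2) (.ofReal (p / 2)) μ :=
          eLpNorm_add_le (by fun_prop) (by fun_prop) (by simp; linarith)
      _ = _ := by
        rw [eLpNorm_const_smul, eLpNorm_sq_ofReal_div_two (by positivity),
          eLpNorm_sq_ofReal_div_two (by positivity), Real.enorm_of_nonneg (by linarith)]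
  have hmean : (u ^ 2 + v ^ 2) ^ (p / 2) ≤ 2 ^ (p / 2 - 1) * (u ^ p + v ^ p) := by
    have := ENNReal.rpow_add_le_mul_rpow_add_rpow (u ^ 2) (v ^ 2) (p := p / 2) (by linarith)
    simpa only [← ENNReal.rpow_two, ← ENNReal.rpow_mul, show 2 * (p / 2) = p by ring] using this
  refine (ENNReal.rpow_le_rpow_iff hp₀).1 ?_
  calc (u ^ 2 + v ^ 2) ^ (p / 2) ≤ 2 ^ (p / 2 - 1) * (2 * W ^ (p / 2)) := by
        grw [hmean, hpoint]
    _ = (2 * W) ^ (p / 2) := by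
        rw [ENNReal.mul_rpow_of_nonneg _ _ hp₀.le, ← mul_assoc]
        congr 1
        conv_rhs => rw [show p / 2 = p / 2 - 1 + 1 by ring,
          ENNReal.rpow_add _ _ two_ne_zero ENNReal.ofNat_ne_top, ENNReal.rpow_one]
    _ ≤ _ := by gcongr

end eLpNorm

/-- **`L^p(μ)` is `(2, √(p−1))`-smooth for `2 ≤ p < ∞`.**
For all `f, g ∈ L^p(μ)` one has
`‖f+g‖² + ‖f−g‖² ≤ 2‖f‖² + 2(p−1)‖g‖²`. -/
theorem Lp_two_smooth
    {S : Type*} [MeasurableSpace S] (μ : Measure S)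
    (p : ℝ) (hp : 2 ≤ p)
    (f g : Lp ℝ (ENNReal.ofReal p) μ) :
    ‖f + g‖ ^ 2 + ‖f - g‖ ^ 2 ≤ 2 * ‖f‖ ^ 2 + 2 * (p - 1) * ‖g‖ ^ 2 := by
  have key := eLpNorm_add_sq_add_eLpNorm_sub_sq_le hp (Lp.aestronglyMeasurable f)
    (Lp.aestronglyMeasurable g)
  rw [← eLpNorm_congr_ae (Lp.coeFn_add f g), ← eLpNorm_congr_ae (Lp.coeFn_sub f g)] at key
  simp only [Lp.norm_def, ← ENNReal.toReal_pow]
  calc _ = (eLpNorm (f + g) (.ofReal p) μ ^ 2 + eLpNorm (f - g) (.ofReal p) μ ^ 2).toReal := by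
        rw [ENNReal.toReal_add (by finiteness) (by finiteness)]
    _ ≤ (2 * (eLpNorm f (.ofReal p) μ ^ 2
          + ENNReal.ofReal (p - 1) * eLpNorm g (.ofReal p) μ ^ 2)).toReal :=
        ENNReal.toReal_mono (by finiteness) key
    _ = _ := by
        rw [ENNReal.toReal_mul, ENNReal.toReal_add (by finiteness) (by finiteness),
          ENNReal.toReal_mul, ENNReal.toReal_ofReal (by linarith), ENNReal.toReal_ofNat]
        ring
end

section
/- Let 2 ≤ p < ∞ and let X be a (2,D)-smooth Banach space. Then the sequence space ℓ^p(ℕ;X) is (2, D·√(p−1))-smooth; that is, for all x, y ∈ ℓ^p(ℕ;X) one has ‖x+y‖² + ‖x−y‖² ≤ 2‖x‖² + 2D²(p−1)‖y‖², where ‖x‖ = (Σ_n ‖x_n‖_X^p)^{1/p}. -/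
/-!
The scalar two-point inequality `(1 + t)^q + (1 - t)^q ≤ 2 (1 + (q - 1) t²)^(q/2)` on `[0, 1]`,
`q ≥ 2`, goes by induction on `q` in steps of `2`: comparing derivatives twice reduces it to the
same inequality for `q - 2`, and for `0 ≤ q ≤ 2` it is concavity of `s ↦ s^(q/2)`.
Homogenised at `a = (‖u + v‖ + ‖u - v‖)/2`, `b = (‖u + v‖ - ‖u - v‖)/2` and combined with
`(2, D)`-smoothness, it bounds `‖u + v‖^p + ‖u - v‖^p` by `2 (‖u‖² + (p - 1) D² ‖v‖²)^(p/2)` in `X`.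
Minkowski's inequality in `ℓ^(p/2)` for `(‖xₙ‖²)` and `((p - 1) D² ‖yₙ‖²)` sums this coordinatewise
bound to the same bound in `ℓ^p(X)`, and convexity of `s ↦ s^(p/2)` turns `p`-th powers back
into squares.
-/

open Set

lemma rpow_add_rpow_le_two_mul_rpow_midpoint {r a b : ℝ} (hr0 : 0 ≤ r) (hr1 : r ≤ 1)
    (ha : 0 ≤ a) (hb : 0 ≤ b) : a ^ r + b ^ r ≤ 2 * ((a + b) / 2) ^ r := by
  have h := (Real.concaveOn_rpow hr0 hr1).2 (mem_Ici.2 ha) (mem_Ici.2 hb)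
    (by norm_num : (0 : ℝ) ≤ 1 / 2) (by norm_num : (0 : ℝ) ≤ 1 / 2) (by norm_num)
  simp only [smul_eq_mul] at h
  rw [show 1 / 2 * a + 1 / 2 * b = (a + b) / 2 by ring] at h
  linarith

lemma midpoint_rpow_le_rpow_add_rpow {r a b : ℝ} (hr : 1 ≤ r) (ha : 0 ≤ a) (hb : 0 ≤ b) :
    2 * ((a + b) / 2) ^ r ≤ a ^ r + b ^ r := by
  have h := (convexOn_rpow hr).2 (mem_Ici.2 ha) (mem_Ici.2 hb)
    (by norm_num : (0 : ℝ) ≤ 1 / 2) (by norm_num : (0 : ℝ) ≤ 1 / 2) (by norm_num)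
  simp only [smul_eq_mul] at h
  rw [show 1 / 2 * a + 1 / 2 * b = (a + b) / 2 by ring] at h
  linarith

lemma sq_rpow_half {a : ℝ} (ha : 0 ≤ a) (p : ℝ) : (a ^ 2) ^ (p / 2) = a ^ p := by
  rw [← Real.rpow_natCast_mul ha]; congr 1; push_cast; ring

def TwoPointBound (q c : ℝ) : Prop :=
  ∀ t ∈ Icc (0 : ℝ) 1, (1 + t) ^ q + (1 - t) ^ q ≤ 2 * (1 + c * t ^ 2) ^ (q / 2)

lemma TwoPointBound.mono {q c c' : ℝ} (h : TwoPointBound q c) (hq : 0 ≤ q) (hc : 0 ≤ c)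
    (hcc' : c ≤ c') : TwoPointBound q c' := fun t ht =>
  (h t ht).trans <| by gcongr

lemma twoPointBound_one {q : ℝ} (hq0 : 0 ≤ q) (hq2 : q ≤ 2) : TwoPointBound q 1 := by
  intro t ⟨ht0, ht1⟩
  rw [← sq_rpow_half (by linarith : 0 ≤ 1 + t), ← sq_rpow_half (by linarith : 0 ≤ 1 - t)]
  convert rpow_add_rpow_le_two_mul_rpow_midpoint (by linarith : 0 ≤ q / 2) (by linarith)
    (sq_nonneg (1 + t)) (sq_nonneg (1 - t)) using 3
  ring

lemma hasDerivAt_one_add_rpow {q : ℝ} (hq : 1 ≤ q) (s : ℝ) :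
    HasDerivAt (fun s => (1 + s) ^ q) (q * (1 + s) ^ (q - 1)) s := by
  simpa using ((hasDerivAt_id s).const_add 1).rpow_const (p := q) (Or.inr hq)

lemma hasDerivAt_one_sub_rpow {q : ℝ} (hq : 1 ≤ q) (s : ℝ) :
    HasDerivAt (fun s => (1 - s) ^ q) (-(q * (1 - s) ^ (q - 1))) s := by
  simpa using ((hasDerivAt_id s).const_sub 1).rpow_const (p := q) (Or.inr hq)

lemma le_of_hasDerivAt_le {f g f' g' : ℝ → ℝ} {a b : ℝ}
    (hf : ∀ s, HasDerivAt f (f' s) s) (hg : ∀ s, HasDerivAt g (g' s) s) (ha : f a ≤ g a)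
    (hfg : ∀ s ∈ Ico a b, f' s ≤ g' s) : ∀ ⦃s⦄, s ∈ Icc a b → f s ≤ g s :=
  image_le_of_deriv_right_le_deriv_boundary
    (fun s _ => (hf s).continuousAt.continuousWithinAt) (fun s _ => (hf s).hasDerivWithinAt) ha
    (fun s _ => (hg s).continuousAt.continuousWithinAt) (fun s _ => (hg s).hasDerivWithinAt) hfg

lemma one_add_rpow_sub_one_sub_rpow_le_s5 {q : ℝ} (hq : 2 ≤ q) (h : TwoPointBound (q - 2) (q - 1))
    {t : ℝ} (ht : t ∈ Icc (0 : ℝ) 1) :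
    (1 + t) ^ (q - 1) - (1 - t) ^ (q - 1) ≤
      2 * (q - 1) * (1 + (q - 1) * t ^ 2) ^ ((q - 2) / 2) * t := by
  have hq1 : 1 ≤ q - 1 := by linarith
  have hderiv (s : ℝ) : HasDerivAt (fun s => (1 + s) ^ (q - 1) - (1 - s) ^ (q - 1))
      ((q - 1) * ((1 + s) ^ (q - 2) + (1 - s) ^ (q - 2))) s := by
    refine ((hasDerivAt_one_add_rpow hq1 s).sub (hasDerivAt_one_sub_rpow hq1 s)).congr_deriv ?_
    rw [show q - 1 - 1 = q - 2 by ring]; ring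
  refine le_of_hasDerivAt_le (a := 0) (b := t) hderiv
    (fun s => ((hasDerivAt_id s).const_mul _)) (by simp) (fun s hs => ?_) ⟨ht.1, le_rfl⟩
  have hst : s ^ 2 ≤ t ^ 2 := pow_le_pow_left₀ hs.1 hs.2.le 2
  have hs01 : s ∈ Icc (0 : ℝ) 1 := ⟨hs.1, hs.2.le.trans ht.2⟩
  calc (q - 1) * ((1 + s) ^ (q - 2) + (1 - s) ^ (q - 2))
      ≤ (q - 1) * (2 * (1 + (q - 1) * s ^ 2) ^ ((q - 2) / 2)) := by
        gcongr; exact h s hs01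
    _ ≤ (q - 1) * (2 * (1 + (q - 1) * t ^ 2) ^ ((q - 2) / 2)) := by gcongr
    _ = 2 * (q - 1) * (1 + (q - 1) * t ^ 2) ^ ((q - 2) / 2) * 1 := by ring

lemma TwoPointBound.of_sub_two {q : ℝ} (hq : 2 ≤ q) (h : TwoPointBound (q - 2) (q - 1)) :
    TwoPointBound q (q - 1) := by
  have hq1 : 1 ≤ q := by linarith
  have hpos (s : ℝ) : 0 < 1 + (q - 1) * s ^ 2 := by nlinarith [sq_nonneg s]
  have hF (s : ℝ) : HasDerivAt (fun s => (1 + s) ^ q + (1 - s) ^ q)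
      (q * ((1 + s) ^ (q - 1) - (1 - s) ^ (q - 1))) s :=
    ((hasDerivAt_one_add_rpow hq1 s).add (hasDerivAt_one_sub_rpow hq1 s)).congr_deriv (by ring)
  have hG (s : ℝ) : HasDerivAt (fun s => 2 * (1 + (q - 1) * s ^ 2) ^ (q / 2))
      (q * (2 * (q - 1) * (1 + (q - 1) * s ^ 2) ^ ((q - 2) / 2) * s)) s := by
    have hbase : HasDerivAt (fun s => 1 + (q - 1) * s ^ 2) ((q - 1) * (2 * s)) s := by
      simpa using ((hasDerivAt_pow 2 s).const_mul (q - 1)).const_add 1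
    refine ((hbase.rpow_const (p := q / 2) (Or.inl (hpos s).ne')).const_mul 2).congr_deriv ?_
    rw [show q / 2 - 1 = (q - 2) / 2 by ring]; ring
  intro t ht
  refine le_of_hasDerivAt_le hF hG (by norm_num) (fun s hs => ?_) ht
  have hs01 : s ∈ Icc (0 : ℝ) 1 := Ico_subset_Icc_self hs
  gcongr
  exact one_add_rpow_sub_one_sub_rpow_le_s5 hq h hs01

lemma twoPointBound_sub_one {q : ℝ} (hq : 2 ≤ q) : TwoPointBound q (q - 1) := by
  obtain ⟨n, hn⟩ := exists_nat_ge q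
  induction n generalizing q with
  | zero => norm_num at hn; linarith
  | succ n ih =>
    refine TwoPointBound.of_sub_two hq ?_
    rcases le_or_gt q 4 with hq4 | hq4
    · exact (twoPointBound_one (by linarith) (by linarith)).mono (by linarith) zero_le_one
        (by linarith)
    · refine (ih (by linarith) (by push_cast at hn; linarith)).mono (by linarith) (by linarith)
        (by linarith)

lemma add_rpow_add_sub_rpow_le_s5 {p a b : ℝ} (hp : 2 ≤ p) (hb : 0 ≤ b) (hba : b ≤ a) :
    (a + b) ^ p + (a - b) ^ p ≤ 2 * (a ^ 2 + (p - 1) * b ^ 2) ^ (p / 2) := by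
  rcases (hb.trans hba).eq_or_lt with rfl | ha
  · obtain rfl : b = 0 := le_antisymm hba hb
    norm_num [Real.zero_rpow (by linarith : p ≠ 0), Real.zero_rpow (by linarith : p / 2 ≠ 0)]
  have ht : b / a ∈ Icc (0 : ℝ) 1 := ⟨by positivity, (div_le_one ha).2 hba⟩
  have hplus : a + b = a * (1 + b / a) := by field_simp
  have hminus : a - b = a * (1 - b / a) := by field_simp
  have hsum : a ^ 2 + (p - 1) * b ^ 2 = a ^ 2 * (1 + (p - 1) * (b / a) ^ 2) := by field_simp
  rw [hplus, hminus, hsum, Real.mul_rpow ha.le (by linarith [ht.1]),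
    Real.mul_rpow ha.le (by linarith [ht.2]), Real.mul_rpow (by positivity) (by nlinarith),
    sq_rpow_half ha.le]
  have := twoPointBound_sub_one hp _ ht
  have hap : 0 ≤ a ^ p := by positivity
  nlinarith

lemma norm_add_rpow_add_norm_sub_rpow_le {X : Type*} [NormedAddCommGroup X] {p D : ℝ}
    (hp : 2 ≤ p)
    (hsmooth : ∀ x y : X, ‖x + y‖ ^ 2 + ‖x - y‖ ^ 2 ≤ 2 * ‖x‖ ^ 2 + 2 * D ^ 2 * ‖y‖ ^ 2)
    (a b : X) :
    ‖a + b‖ ^ p + ‖a - b‖ ^ p ≤ 2 * (‖a‖ ^ 2 + (p - 1) * D ^ 2 * ‖b‖ ^ 2) ^ (p / 2) := by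
  wlog hVU : ‖a - b‖ ≤ ‖a + b‖ generalizing b
  · have := this (-b) (by rw [← sub_eq_add_neg, sub_neg_eq_add]; exact le_of_not_ge hVU)
    rwa [← sub_eq_add_neg, sub_neg_eq_add, norm_neg, add_comm (‖a - b‖ ^ p)] at this
  have hdiff : ‖a + b‖ - ‖a - b‖ ≤ 2 * ‖b‖ := by
    have h := norm_sub_norm_le (a + b) (a - b)
    rw [show a + b - (a - b) = b + b by abel] at h
    linarith [norm_add_le b b]
  -- the `D ≥ 1` hidden in smoothness at `x = 0`: it absorbs the excess
  -- `(p - 2) ((‖a + b‖ - ‖a - b‖) / 2)²` of the scalar bound over `(2, D)`-smoothness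
  have hD : ‖b‖ ^ 2 ≤ D ^ 2 * ‖b‖ ^ 2 := by
    have h := hsmooth 0 b
    rw [zero_add, zero_sub, norm_neg, norm_zero] at h
    linarith
  have hsm := hsmooth a b
  have key := add_rpow_add_sub_rpow_le_s5 hp (a := (‖a + b‖ + ‖a - b‖) / 2)
    (b := (‖a + b‖ - ‖a - b‖) / 2) (by linarith) (by linarith [norm_nonneg (a - b)])
  rw [show (‖a + b‖ + ‖a - b‖) / 2 + (‖a + b‖ - ‖a - b‖) / 2 = ‖a + b‖ by ring,
    show (‖a + b‖ + ‖a - b‖) / 2 - (‖a + b‖ - ‖a - b‖) / 2 = ‖a - b‖ by ring] at key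
  refine key.trans (mul_le_mul_of_nonneg_left
    (Real.rpow_le_rpow (add_nonneg (sq_nonneg _) (mul_nonneg (by linarith) (sq_nonneg _))) ?_
      (by linarith)) zero_le_two)
  have hd2 : ((‖a + b‖ - ‖a - b‖) / 2) ^ 2 ≤ ‖b‖ ^ 2 := by
    nlinarith [norm_nonneg b]
  nlinarith

lemma lp.norm_add_rpow_add_norm_sub_rpow_le {ι : Type*} {E : ι → Type*}
    [∀ i, NormedAddCommGroup (E i)] {p c : ℝ} (hp : 2 ≤ p) (hc : 0 ≤ c)
    {x y : lp E (ENNReal.ofReal p)}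
    (h : ∀ i, ‖x i + y i‖ ^ p + ‖x i - y i‖ ^ p ≤ 2 * (‖x i‖ ^ 2 + c * ‖y i‖ ^ 2) ^ (p / 2)) :
    ‖x + y‖ ^ p + ‖x - y‖ ^ p ≤ 2 * (‖x‖ ^ 2 + c * ‖y‖ ^ 2) ^ (p / 2) := by
  have hP : (ENNReal.ofReal p).toReal = p := ENNReal.toReal_ofReal (by linarith)
  have hsum (z : lp E (ENNReal.ofReal p)) : HasSum (fun i => ‖z i‖ ^ p) (‖z‖ ^ p) := by
    simpa only [hP] using lp.hasSum_norm (by rw [hP]; linarith) z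
  have hsum_y : HasSum (fun i => (c * ‖y i‖ ^ 2) ^ (p / 2)) ((c * ‖y‖ ^ 2) ^ (p / 2)) := by
    simp only [Real.mul_rpow hc (sq_nonneg _), sq_rpow_half (norm_nonneg _),
      sq_rpow_half (lp.norm_nonneg' y)]
    exact (hsum y).mul_left _
  obtain ⟨C, hC0, hC, hsumC⟩ := Real.Lp_add_le_hasSum_of_nonneg (by linarith : 1 ≤ p / 2)
    (fun i => sq_nonneg ‖x i‖) (fun i => by positivity) (sq_nonneg ‖x‖) (by positivity)
    (by simpa only [sq_rpow_half (norm_nonneg _), sq_rpow_half (lp.norm_nonneg' x)] using hsum x)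
    hsum_y
  calc ‖x + y‖ ^ p + ‖x - y‖ ^ p ≤ 2 * C ^ (p / 2) := by
        refine hasSum_le h ?_ (hsumC.mul_left 2)
        simpa only [lp.coeFn_add, lp.coeFn_sub, Pi.add_apply, Pi.sub_apply] using
          (hsum (x + y)).add (hsum (x - y))
    _ ≤ 2 * (‖x‖ ^ 2 + c * ‖y‖ ^ 2) ^ (p / 2) := by gcongr

lemma add_le_two_mul_of_rpow_add_rpow_le {r u v w : ℝ} (hr : 1 ≤ r) (hu : 0 ≤ u) (hv : 0 ≤ v)
    (hw : 0 ≤ w) (h : u ^ r + v ^ r ≤ 2 * w ^ r) : u + v ≤ 2 * w := by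
  have hmid : ((u + v) / 2) ^ r ≤ w ^ r := by
    linarith [midpoint_rpow_le_rpow_add_rpow hr hu hv]
  rw [Real.rpow_le_rpow_iff (by positivity) hw (by linarith)] at hmid
  linarith

theorem lp_sequence_two_smooth_general
    {X : Type*} [NormedAddCommGroup X]
    (p D : ℝ) (hp : 2 ≤ p)
    (hsmooth : ∀ x y : X,
      ‖x + y‖ ^ 2 + ‖x - y‖ ^ 2 ≤ 2 * ‖x‖ ^ 2 + 2 * D ^ 2 * ‖y‖ ^ 2)
    (x y : lp (fun _ : ℕ => X) (ENNReal.ofReal p)) :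
    ‖x + y‖ ^ 2 + ‖x - y‖ ^ 2 ≤ 2 * ‖x‖ ^ 2 + 2 * D ^ 2 * (p - 1) * ‖y‖ ^ 2 := by
  have hc : 0 ≤ (p - 1) * D ^ 2 := mul_nonneg (by linarith) (sq_nonneg D)
  have hpow := lp.norm_add_rpow_add_norm_sub_rpow_le hp hc (x := x) (y := y) fun i => by
    simpa only [mul_assoc] using norm_add_rpow_add_norm_sub_rpow_le hp hsmooth (x i) (y i)
  rw [← sq_rpow_half (lp.norm_nonneg' (x + y)), ← sq_rpow_half (lp.norm_nonneg' (x - y))] at hpow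
  have := add_le_two_mul_of_rpow_add_rpow_le (by linarith) (sq_nonneg _) (sq_nonneg _)
    (by positivity) hpow
  linarith

/-- **`ℓ^p(ℕ;X)` is `(2, D√(p−1))`-smooth when `X` is `(2,D)`-smooth and `2 ≤ p < ∞`.**
For all `x, y ∈ ℓ^p(ℕ;X)` one has `‖x+y‖² + ‖x−y‖² ≤ 2‖x‖² + 2D²(p−1)‖y‖²`. -/
theorem lp_sequence_two_smooth
    {X : Type*} [NormedAddCommGroup X] [NormedSpace ℝ X] [CompleteSpace X]
    (p D : ℝ) (hp : 2 ≤ p) (hD : 0 ≤ D)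
    (hsmooth : ∀ x y : X,
      ‖x + y‖ ^ 2 + ‖x - y‖ ^ 2 ≤ 2 * ‖x‖ ^ 2 + 2 * D ^ 2 * ‖y‖ ^ 2)
    (x y : lp (fun _ : ℕ => X) (ENNReal.ofReal p)) :
    ‖x + y‖ ^ 2 + ‖x - y‖ ^ 2 ≤ 2 * ‖x‖ ^ 2 + 2 * D ^ 2 * (p - 1) * ‖y‖ ^ 2 :=
  lp_sequence_two_smooth_general p D hp hsmooth x y
end

section
/- Let X be a real normed space, let λ > 0 and D ≥ 0, and let q : X → ℝ be twice Fréchet differentiable with q(x) ≥ 0 and q''(x)(y,y) ≤ 2D²‖y‖² for all x, y ∈ X. Define h : X → ℝ by h(x) = (1 + λ·q(x))^{1/2}. Then h is twice Fréchet differentiable, its second derivative satisfies h''(x)(y,y) = λ·q''(x)(y,y) / (2(1+λq(x))^{1/2}) − λ²·(q'(x)y)² / (4(1+λq(x))^{3/2}), and consequently h''(x)(y,y) ≤ D²·λ·‖y‖² for all x, y ∈ X. -/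
/-!
Write `h = √u` with `u = 1 + λq ≥ 1`. The chain rule twice gives
`h''(x)(y,y) = u''(x)(y,y) / (2√u) - (u'(x)y)² / (4√u³)`; the second term is nonpositive, and
`√u ≥ 1` turns the bound on `q''` into the bound on `h''`.
-/

open Real

theorem hasDerivAt_one_div_two_mul_sqrt {t : ℝ} (ht : 0 < t) :
    HasDerivAt (fun s => 1 / (2 * √s)) (-1 / (4 * √t ^ 3)) t := by
  have hs : 0 < √t := sqrt_pos.2 ht
  refine ((hasDerivAt_const t 1).div ((hasDerivAt_sqrt ht.ne').const_mul 2)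
    (by positivity)).congr_deriv ?_
  field_simp
  ring

theorem rpow_three_halves_eq_sqrt_pow {t : ℝ} (ht : 0 ≤ t) : t ^ (3 / 2 : ℝ) = √t ^ 3 := by
  rw [sqrt_eq_rpow, ← rpow_natCast, ← rpow_mul ht]
  norm_num

theorem mul_div_two_mul_rpow_sub_le {t lam a b c D : ℝ} (ht : 1 ≤ t) (hlam : 0 ≤ lam)
    (ha : a ≤ 2 * D ^ 2 * c) (hc : 0 ≤ c) :
    lam * a / (2 * t ^ (1 / 2 : ℝ)) - lam ^ 2 * b ^ 2 / (4 * t ^ (3 / 2 : ℝ))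
      ≤ D ^ 2 * lam * c := by
  have hs : 1 ≤ t ^ (1 / 2 : ℝ) := one_le_rpow ht (by norm_num)
  calc lam * a / (2 * t ^ (1 / 2 : ℝ)) - lam ^ 2 * b ^ 2 / (4 * t ^ (3 / 2 : ℝ))
      ≤ lam * a / (2 * t ^ (1 / 2 : ℝ)) := sub_le_self _ (by positivity)
    _ ≤ lam * (2 * D ^ 2 * c) / (2 * t ^ (1 / 2 : ℝ)) := by gcongr
    _ ≤ lam * (2 * D ^ 2 * c) / 2 := by gcongr; linarith
    _ = D ^ 2 * lam * c := by ring

section SecondDerivative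

variable {X : Type*} [NormedAddCommGroup X] [NormedSpace ℝ X]

theorem hasFDerivAt_fderiv_comp_of_hasDerivAt {f f' : ℝ → ℝ} {f'' : ℝ} {u : X → ℝ}
    {u' : X → X →L[ℝ] ℝ} {u'' : X →L[ℝ] X →L[ℝ] ℝ} {x : X}
    (hf : ∀ z, HasDerivAt f (f' (u z)) (u z)) (hf' : HasDerivAt f' f'' (u x))
    (hu : ∀ z, HasFDerivAt u (u' z) z) (hu' : HasFDerivAt u' u'' x) :
    HasFDerivAt (fderiv ℝ fun z => f (u z))
      (f' (u x) • u'' + (f'' • u' x).smulRight (u' x)) x := by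
  have hfderiv : (fderiv ℝ fun z => f (u z)) = fun z => f' (u z) • u' z :=
    funext fun z => ((hf z).comp_hasFDerivAt z (hu z)).fderiv
  rw [hfderiv]
  exact (hf'.comp_hasFDerivAt x (hu x)).smul hu'

theorem hasFDerivAt_fderiv_sqrt_comp {u : X → ℝ} {u' : X → X →L[ℝ] ℝ}
    {u'' : X →L[ℝ] X →L[ℝ] ℝ} {x : X} (hpos : ∀ z, 0 < u z)
    (hu : ∀ z, HasFDerivAt u (u' z) z) (hu' : HasFDerivAt u' u'' x) :
    HasFDerivAt (fderiv ℝ fun z => √(u z))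
      ((1 / (2 * √(u x))) • u'' + ((-1 / (4 * √(u x) ^ 3)) • u' x).smulRight (u' x)) x :=
  hasFDerivAt_fderiv_comp_of_hasDerivAt (fun z => hasDerivAt_sqrt (hpos z).ne')
    (hasDerivAt_one_div_two_mul_sqrt (hpos x)) hu hu'

end SecondDerivative

theorem sqrt_one_add_lambda_second_deriv_general
    {X : Type*} [NormedAddCommGroup X] [NormedSpace ℝ X]
    (lam D : ℝ) (hlam : 0 < lam)
    (q : X → ℝ) (hq : Differentiable ℝ q) (hq' : Differentiable ℝ (fderiv ℝ q))
    (hq0 : ∀ x, 0 ≤ q x)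
    (hq'' : ∀ x y : X, fderiv ℝ (fderiv ℝ q) x y y ≤ 2 * D ^ 2 * ‖y‖ ^ 2) :
    Differentiable ℝ (fun x => Real.sqrt (1 + lam * q x)) ∧
    Differentiable ℝ (fderiv ℝ (fun x => Real.sqrt (1 + lam * q x))) ∧
    ∀ x y : X,
      fderiv ℝ (fderiv ℝ (fun x => Real.sqrt (1 + lam * q x))) x y y
        = lam * (fderiv ℝ (fderiv ℝ q) x y y) / (2 * (1 + lam * q x) ^ ((1 : ℝ) / 2))
          - lam ^ 2 * (fderiv ℝ q x y) ^ 2 / (4 * (1 + lam * q x) ^ ((3 : ℝ) / 2)) ∧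
      fderiv ℝ (fderiv ℝ (fun x => Real.sqrt (1 + lam * q x))) x y y
        ≤ D ^ 2 * lam * ‖y‖ ^ 2 := by
  have hu_ge : ∀ x, 1 ≤ 1 + lam * q x := fun x => by nlinarith [hq0 x]
  have hu_pos : ∀ x, 0 < 1 + lam * q x := fun x => one_pos.trans_le (hu_ge x)
  have hu : ∀ x, HasFDerivAt (fun x => 1 + lam * q x) (lam • fderiv ℝ q x) x :=
    fun x => ((hq x).hasFDerivAt.const_mul lam).const_add 1
  have hh'' : ∀ x, HasFDerivAt (fderiv ℝ fun x => √(1 + lam * q x)) _ x := fun x =>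
    hasFDerivAt_fderiv_sqrt_comp hu_pos hu ((hq' x).hasFDerivAt.const_smul lam)
  refine ⟨fun x => ((hasDerivAt_sqrt (hu_pos x).ne').comp_hasFDerivAt x (hu x)).differentiableAt,
    fun x => (hh'' x).differentiableAt, fun x y => ?_⟩
  have hformula : fderiv ℝ (fderiv ℝ (fun x => √(1 + lam * q x))) x y y
      = lam * (fderiv ℝ (fderiv ℝ q) x y y) / (2 * (1 + lam * q x) ^ ((1 : ℝ) / 2))
        - lam ^ 2 * (fderiv ℝ q x y) ^ 2 / (4 * (1 + lam * q x) ^ ((3 : ℝ) / 2)) := by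
    rw [(hh'' x).fderiv, ← sqrt_eq_rpow, rpow_three_halves_eq_sqrt_pow (hu_pos x).le]
    simp only [add_apply, smul_apply,
      ContinuousLinearMap.smulRight_apply, smul_eq_mul]
    ring
  refine ⟨hformula, ?_⟩
  rw [hformula]
  exact mul_div_two_mul_rpow_sub_le (hu_ge x) hlam.le (hq'' x y) (by positivity)

/-- **Second derivative formula and bound for `h_λ(x) = (1 + λ q(x))^{1/2}`.**
If `q : X → ℝ` is twice Fréchet differentiable with `q ≥ 0` and
`q''(x)(y,y) ≤ 2D²‖y‖²`, and `λ > 0`, `D ≥ 0`, then `h(x) = (1 + λ q(x))^{1/2}` is twice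
Fréchet differentiable with
`h''(x)(y,y) = λ q''(x)(y,y)/(2(1+λq(x))^{1/2}) − λ² (q'(x)y)²/(4(1+λq(x))^{3/2})`,
and consequently `h''(x)(y,y) ≤ D² λ ‖y‖²`. -/
theorem sqrt_one_add_lambda_second_deriv
    {X : Type*} [NormedAddCommGroup X] [NormedSpace ℝ X]
    (lam D : ℝ) (hlam : 0 < lam) (hD : 0 ≤ D)
    (q : X → ℝ) (hq : Differentiable ℝ q) (hq' : Differentiable ℝ (fderiv ℝ q))
    (hq0 : ∀ x, 0 ≤ q x)
    (hq'' : ∀ x y : X, fderiv ℝ (fderiv ℝ q) x y y ≤ 2 * D ^ 2 * ‖y‖ ^ 2) :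
    Differentiable ℝ (fun x => Real.sqrt (1 + lam * q x)) ∧
    Differentiable ℝ (fderiv ℝ (fun x => Real.sqrt (1 + lam * q x))) ∧
    ∀ x y : X,
      fderiv ℝ (fderiv ℝ (fun x => Real.sqrt (1 + lam * q x))) x y y
        = lam * (fderiv ℝ (fderiv ℝ q) x y y) / (2 * (1 + lam * q x) ^ ((1 : ℝ) / 2))
          - lam ^ 2 * (fderiv ℝ q x y) ^ 2 / (4 * (1 + lam * q x) ^ ((3 : ℝ) / 2)) ∧
      fderiv ℝ (fderiv ℝ (fun x => Real.sqrt (1 + lam * q x))) x y y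
        ≤ D ^ 2 * lam * ‖y‖ ^ 2 :=
  sqrt_one_add_lambda_second_deriv_general lam D hlam q hq hq' hq0 hq''
end
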